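/- Let n, k be integers with n ≥ k + 1 ≥ 3. If G is a vertex-k-maximal graph on n vertices, then |E(G)| ≥ C(n, 2) − C(n − k, 2) = (n − k)k + k(k − 1)/2, where C(a, b) denotes the binomial coefficient. -/

import Mathlib

/-- A finite hypergraph: a finite vertex set together with a finite set of
non-empty edges, each a subset of the vertex set. -/
structure FinsetHypergraph where
  verts : Finset ℕ
  edges : Finset (Finset ℕ)
  edge_sub : ∀ e ∈ edges, e ⊆ verts
  edge_nonempty : ∀ e ∈ edges, e.Nonempty

namespace FinsetHypergraph

/-- `H` is `r`-uniform if every edge has cardinality `r`. -/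
def IsUniform (H : FinsetHypergraph) (r : ℕ) : Prop := ∀ e ∈ H.edges, e.card = r

/-- `H'` is a subhypergraph of `H`. -/
def IsSub (H' H : FinsetHypergraph) : Prop := H'.verts ⊆ H.verts ∧ H'.edges ⊆ H.edges

/-- Two vertices are adjacent if some edge contains both. -/
def Adj (H : FinsetHypergraph) (u v : ℕ) : Prop := ∃ e ∈ H.edges, u ∈ e ∧ v ∈ e

/-- `H` is connected if every pair of vertices is joined by a path
(equivalently, a walk, i.e. is reachable via the adjacency relation). -/
def Connected (H : FinsetHypergraph) : Prop :=
  ∀ u ∈ H.verts, ∀ v ∈ H.verts, Relation.ReflTransGen H.Adj u v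

/-- The subhypergraph of `H` induced by the vertex set `Y`. -/
def induce (H : FinsetHypergraph) (Y : Finset ℕ) : FinsetHypergraph where
  verts := H.verts ∩ Y
  edges := H.edges.filter (fun e => e ⊆ Y)
  edge_sub := by
    intro e he
    simp only [Finset.mem_filter] at he
    exact Finset.subset_inter (H.edge_sub e he.1) he.2
  edge_nonempty := by
    intro e he
    simp only [Finset.mem_filter] at he
    exact H.edge_nonempty e he.1

/-- `X` is a vertex-cut of `H` if deleting `X` leaves a disconnected hypergraph. -/
def IsVertexCut (H : FinsetHypergraph) (X : Finset ℕ) : Prop :=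
  X ⊆ H.verts ∧ ¬ (H.induce (H.verts \ X)).Connected

open Classical in
/-- The vertex-connectivity of `H`: the minimum cardinality of a vertex-cut if one
exists, and `|V(H)| - 1` otherwise. -/
noncomputable def kappa (H : FinsetHypergraph) : ℕ :=
  if ∃ X, H.IsVertexCut X then sInf {m | ∃ X, H.IsVertexCut X ∧ X.card = m}
  else H.verts.card - 1

/-- `κ̄(H)`: the maximum vertex-connectivity over all subhypergraphs of `H`. -/
noncomputable def kappaBar (H : FinsetHypergraph) : ℕ :=
  sSup {m | ∃ H' : FinsetHypergraph, H'.IsSub H ∧ H'.kappa = m}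

/-- `H + e`: add the edge `e` (a non-empty subset of the vertices) to `H`. -/
def addEdge (H : FinsetHypergraph) (e : Finset ℕ) : FinsetHypergraph where
  verts := H.verts
  edges := if e ⊆ H.verts ∧ e.Nonempty then insert e H.edges else H.edges
  edge_sub := by
    intro f hf
    split at hf
    · rcases Finset.mem_insert.mp hf with rfl | hf
      · exact (by assumption : f ⊆ H.verts ∧ f.Nonempty).1
      · exact H.edge_sub f hf
    · exact H.edge_sub f hf
  edge_nonempty := by
    intro f hf
    split at hf
    · rcases Finset.mem_insert.mp hf with rfl | hf
      · exact (by assumption : f ⊆ H.verts ∧ f.Nonempty).2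
      · exact H.edge_nonempty f hf
    · exact H.edge_nonempty f hf

/-- `H + F`: add a set `F` of edges to `H`. -/
def addEdges (H : FinsetHypergraph) (F : Finset (Finset ℕ)) : FinsetHypergraph where
  verts := H.verts
  edges := H.edges ∪ F.filter (fun e => e ⊆ H.verts ∧ e.Nonempty)
  edge_sub := by
    intro f hf
    rcases Finset.mem_union.mp hf with hf | hf
    · exact H.edge_sub f hf
    · exact (Finset.mem_filter.mp hf).2.1
  edge_nonempty := by
    intro f hf
    rcases Finset.mem_union.mp hf with hf | hf
    · exact H.edge_nonempty f hf
    · exact (Finset.mem_filter.mp hf).2.2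

/-- `H` is vertex-`k`-maximal (as an `r`-uniform hypergraph): `κ̄(H) ≤ k`, but adding
any edge of the complement `H^c` creates a subhypergraph of connectivity at least `k + 1`. -/
def VertexKMaximal (H : FinsetHypergraph) (r k : ℕ) : Prop :=
  H.IsUniform r ∧ H.kappaBar ≤ k ∧
    ∀ e : Finset ℕ, e ⊆ H.verts → e.card = r → e ∉ H.edges →
      k + 1 ≤ (H.addEdge e).kappaBar

/-- The complete `r`-uniform hypergraph on the vertex set `V`. -/
def completeHG (V : Finset ℕ) (r : ℕ) : FinsetHypergraph where
  verts := V
  edges := (V.powersetCard r).filter (fun e => e.Nonempty)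
  edge_sub := by
    intro e he
    simp only [Finset.mem_filter, Finset.mem_powersetCard] at he
    exact he.1.1
  edge_nonempty := by
    intro e he
    exact (Finset.mem_filter.mp he).2

/-- The hypergraph on vertex set `V` with no edges. -/
def emptyHG (V : Finset ℕ) : FinsetHypergraph where
  verts := V
  edges := ∅
  edge_sub := by simp
  edge_nonempty := by simp

/-- The `r`-join `H₁ ∨_r H₂`: the union of `H₁` and `H₂` together with all
`r`-element subsets of `V(H₁) ∪ V(H₂)` meeting both `V(H₁)` and `V(H₂)`. -/
def rJoin (H1 H2 : FinsetHypergraph) (r : ℕ) : FinsetHypergraph where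
  verts := H1.verts ∪ H2.verts
  edges := H1.edges ∪ H2.edges ∪
    ((H1.verts ∪ H2.verts).powersetCard r).filter
      (fun e => (e ∩ H1.verts).Nonempty ∧ (e ∩ H2.verts).Nonempty)
  edge_sub := by
    intro e he
    rcases Finset.mem_union.mp he with he | he
    · rcases Finset.mem_union.mp he with he | he
      · exact (H1.edge_sub e he).trans Finset.subset_union_left
      · exact (H2.edge_sub e he).trans Finset.subset_union_right
    · exact (Finset.mem_powersetCard.mp (Finset.mem_filter.mp he).1).1
  edge_nonempty := by
    intro e he
    rcases Finset.mem_union.mp he with he | he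
    · rcases Finset.mem_union.mp he with he | he
      · exact H1.edge_nonempty e he
      · exact H2.edge_nonempty e he
    · obtain ⟨x, hx⟩ := (Finset.mem_filter.mp he).2.1
      exact ⟨x, (Finset.mem_inter.mp hx).1⟩

/-- The union of two hypergraphs. -/
def hUnion (H1 H2 : FinsetHypergraph) : FinsetHypergraph where
  verts := H1.verts ∪ H2.verts
  edges := H1.edges ∪ H2.edges
  edge_sub := by
    intro e he
    rcases Finset.mem_union.mp he with he | he
    · exact (H1.edge_sub e he).trans Finset.subset_union_left
    · exact (H2.edge_sub e he).trans Finset.subset_union_right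
  edge_nonempty := by
    intro e he
    rcases Finset.mem_union.mp he with he | he
    · exact H1.edge_nonempty e he
    · exact H2.edge_nonempty e he

/-- The union of the hypergraphs `f 0, …, f (m-1)`. -/
def unionOver (m : ℕ) (f : ℕ → FinsetHypergraph) : FinsetHypergraph where
  verts := (Finset.range m).biUnion (fun i => (f i).verts)
  edges := (Finset.range m).biUnion (fun i => (f i).edges)
  edge_sub := by
    intro e he
    obtain ⟨i, hi, hei⟩ := Finset.mem_biUnion.mp he
    exact ((f i).edge_sub e hei).trans (Finset.subset_biUnion_of_mem (fun i => (f i).verts) hi)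
  edge_nonempty := by
    intro e he
    obtain ⟨i, _, hei⟩ := Finset.mem_biUnion.mp he
    exact (f i).edge_nonempty e hei

/-- `C` is a component of `G`: a maximal connected subhypergraph. -/
def IsComponent (G C : FinsetHypergraph) : Prop :=
  C.IsSub G ∧ C.Connected ∧
    ∀ C' : FinsetHypergraph, C'.IsSub G → C'.Connected → C.IsSub C' → C' = C

/-- `(S, H₁, H₂)` is a separation triple of `H`: `S` is a minimum vertex-cut,
`H₁ = H[S ∪ V(C₁)]` and `H₂ = H[S ∪ V(C₂)]`, where `C₁` is a component of `H - S`
and `C₂ = H - (S ∪ V(C₁))`. -/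
def IsSeparationTriple (H : FinsetHypergraph) (S : Finset ℕ) (H1 H2 : FinsetHypergraph) : Prop :=
  H.IsVertexCut S ∧ (∀ X : Finset ℕ, H.IsVertexCut X → S.card ≤ X.card) ∧
    ∃ C1 : FinsetHypergraph, IsComponent (H.induce (H.verts \ S)) C1 ∧
      H1 = H.induce (S ∪ C1.verts) ∧
      H2 = H.induce (S ∪ (H.verts \ (S ∪ C1.verts)))

end FinsetHypergraph


/-! Induction on the number of vertices. A vertex-`k`-maximal graph on `k + 1` vertices is
complete. On more vertices, every vertex cut `X` has at least `k` vertices: otherwise, for `u`, `w`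
on different sides of `X`, the `(k+1)`-connected subgraph created by the missing edge `uw` could not
leave `X ∪ {u, w}`. So a minimum cut `S` has exactly `k` vertices and splits `G` into `G[S ∪ C]` and
`G[S ∪ R]`. Adding to each side a maximal set of missing pairs inside `S` that keeps `κ̄ ≤ k` makes
both sides vertex-`k`-maximal, and no missing pair is added on both sides, because the
`(k+1)`-connected subgraph it creates in `G` lies on one side. The induction hypothesis for the two
sides and counting the edges inside `S` give the bound. -/

theorem Nat.add_choose_two (a b : ℕ) : (a + b).choose 2 = a.choose 2 + a * b + b.choose 2 := by
  induction b with
  | zero => rfl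
  | succ b ih =>
    rw [← add_assoc, Nat.choose_succ_left _ _ two_pos, Nat.choose_succ_left _ _ two_pos, ih]
    simp only [Nat.reduceSub, Nat.choose_one_right]
    ring

namespace FinsetHypergraph

open Finset

variable {G H K : FinsetHypergraph} {S C R X Y e : Finset ℕ} {A B : Finset (Finset ℕ)} {k r : ℕ}

theorem ext (hv : G.verts = H.verts) (he : G.edges = H.edges) : G = H := by
  cases G; cases H; simp_all

theorem IsSub.refl (G : FinsetHypergraph) : G.IsSub G := ⟨subset_rfl, subset_rfl⟩

theorem IsSub.trans (h₁ : G.IsSub H) (h₂ : H.IsSub K) : G.IsSub K :=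
  ⟨h₁.1.trans h₂.1, h₁.2.trans h₂.2⟩

theorem induce_isSub (G : FinsetHypergraph) (Y : Finset ℕ) : (G.induce Y).IsSub G :=
  ⟨inter_subset_left, filter_subset _ _⟩

theorem mem_induce_edges {f : Finset ℕ} : f ∈ (G.induce Y).edges ↔ f ∈ G.edges ∧ f ⊆ Y :=
  mem_filter

theorem edges_addEdge_subset (G : FinsetHypergraph) (e : Finset ℕ) :
    (G.addEdge e).edges ⊆ insert e G.edges := by
  unfold addEdge
  split_ifs
  · exact subset_rfl
  · exact subset_insert e G.edges

theorem mem_addEdges_edges {f : Finset ℕ} :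
    f ∈ (G.addEdges A).edges ↔ f ∈ G.edges ∨ f ∈ A ∧ f ⊆ G.verts ∧ f.Nonempty := by
  simp only [addEdges, mem_union, mem_filter]

theorem addEdges_empty (G : FinsetHypergraph) : G.addEdges ∅ = G :=
  ext rfl (by simp [addEdges])

theorem addEdge_addEdges (G : FinsetHypergraph) (A : Finset (Finset ℕ)) (e : Finset ℕ) :
    (G.addEdges A).addEdge e = G.addEdges (insert e A) := by
  refine ext rfl ?_
  by_cases he : e ⊆ G.verts ∧ e.Nonempty
  · simp [addEdge, addEdges, he, filter_insert, union_insert]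
  · simp [addEdge, addEdges, he, filter_insert]

theorem card_edges_addEdges_le (G : FinsetHypergraph) (A : Finset (Finset ℕ)) :
    #(G.addEdges A).edges ≤ #G.edges + #A :=
  (card_union_le _ _).trans (Nat.add_le_add_left (card_filter_le _ _) _)

theorem isSub_induce_addEdges (hH : H.IsSub (G.addEdge e)) (hY : H.verts ⊆ Y) (heA : e ∈ A) :
    H.IsSub ((G.induce Y).addEdges A) := by
  refine ⟨subset_inter hH.1 hY, fun f hf => mem_addEdges_edges.mpr ?_⟩
  have hfY : f ⊆ Y := (H.edge_sub f hf).trans hY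
  rcases mem_insert.mp (edges_addEdge_subset G e (hH.2 hf)) with rfl | hfG
  · exact Or.inr ⟨heA, subset_inter ((H.edge_sub f hf).trans hH.1) hfY, H.edge_nonempty f hf⟩
  · exact Or.inl (mem_induce_edges.mpr ⟨hfG, hfY⟩)

theorem kappa_le_card_of_isVertexCut (hX : G.IsVertexCut X) : G.kappa ≤ #X := by
  rw [kappa, if_pos ⟨X, hX⟩]
  exact Nat.sInf_le ⟨X, hX, rfl⟩

theorem exists_isVertexCut_card_eq_kappa (h : ∃ X, G.IsVertexCut X) :
    ∃ X, G.IsVertexCut X ∧ #X = G.kappa := by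
  obtain ⟨X, hX⟩ := h
  obtain ⟨Y, hY, hcard⟩ := Nat.sInf_mem (s := {m | ∃ X, G.IsVertexCut X ∧ #X = m}) ⟨_, X, hX, rfl⟩
  refine ⟨Y, hY, ?_⟩
  rw [kappa, if_pos ⟨X, hX⟩, hcard]

theorem kappa_of_forall_not_isVertexCut (h : ∀ X, ¬ G.IsVertexCut X) :
    G.kappa = #G.verts - 1 := by
  rw [kappa, if_neg (not_exists.mpr h)]

theorem IsVertexCut.ssubset (hX : G.IsVertexCut X) : X ⊂ G.verts := by
  refine Finset.ssubset_iff_subset_ne.mpr ⟨hX.1, ?_⟩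
  rintro rfl
  exact hX.2 fun u hu => by simp [induce] at hu

theorem kappa_le_card_sub_one (G : FinsetHypergraph) : G.kappa ≤ #G.verts - 1 := by
  by_cases h : ∃ X, G.IsVertexCut X
  · obtain ⟨X, hX⟩ := h
    have := card_lt_card hX.ssubset
    have := kappa_le_card_of_isVertexCut hX
    omega
  · rw [kappa_of_forall_not_isVertexCut (not_exists.mp h)]

theorem bddAbove_kappa_isSub (G : FinsetHypergraph) :
    BddAbove {m | ∃ H : FinsetHypergraph, H.IsSub G ∧ H.kappa = m} := by
  refine ⟨#G.verts, ?_⟩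
  rintro _ ⟨H, hH, rfl⟩
  exact (kappa_le_card_sub_one H).trans ((Nat.sub_le _ _).trans (card_le_card hH.1))

theorem kappa_le_kappaBar (hH : H.IsSub G) : H.kappa ≤ G.kappaBar :=
  le_csSup (bddAbove_kappa_isSub G) ⟨H, hH, rfl⟩

theorem exists_isSub_kappa_eq_kappaBar (G : FinsetHypergraph) :
    ∃ H : FinsetHypergraph, H.IsSub G ∧ H.kappa = G.kappaBar :=
  Nat.sSup_mem (s := {m | ∃ H : FinsetHypergraph, H.IsSub G ∧ H.kappa = m})
    ⟨G.kappa, G, IsSub.refl G, rfl⟩ (bddAbove_kappa_isSub G)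

theorem kappaBar_mono (h : H.IsSub G) : H.kappaBar ≤ G.kappaBar := by
  obtain ⟨K, hK, hKH⟩ := exists_isSub_kappa_eq_kappaBar H
  exact hKH ▸ kappa_le_kappaBar (hK.trans h)

theorem mem_of_reflTransGen_adj {P : Finset ℕ} (hP : ∀ f ∈ G.edges, ∀ x ∈ f, x ∈ P → f ⊆ P)
    {a b : ℕ} (h : Relation.ReflTransGen G.Adj a b) (ha : a ∈ P) : b ∈ P := by
  induction h with
  | refl => exact ha
  | tail _ hadj ih =>
    obtain ⟨f, hf, hx, hy⟩ := hadj
    exact hP f hf _ hx ih hy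

/-- The sides `C` and `R` may meet `S` and need not lie in `G.verts`, so that the notion passes to
subgraphs and to `G + e` for an edge `e` within one side. -/
structure IsSeparation (G : FinsetHypergraph) (S C R : Finset ℕ) : Prop where
  disjoint : Disjoint C R
  sdiff_subset : G.verts \ S ⊆ C ∪ R
  edge_subset : ∀ f ∈ G.edges, f ⊆ S ∪ C ∨ f ⊆ S ∪ R

namespace IsSeparation

theorem symm (h : G.IsSeparation S C R) : G.IsSeparation S R C :=
  ⟨h.disjoint.symm, union_comm C R ▸ h.sdiff_subset, fun f hf => (h.edge_subset f hf).symm⟩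

theorem mono (h : G.IsSeparation S C R) (hH : H.IsSub G) : H.IsSeparation S C R :=
  ⟨h.disjoint, (sdiff_subset_sdiff hH.1 subset_rfl).trans h.sdiff_subset,
    fun f hf => h.edge_subset f (hH.2 hf)⟩

theorem mono_left (h : G.IsSeparation S C R) (hST : S ⊆ X) : G.IsSeparation X C R :=
  ⟨h.disjoint, (sdiff_subset_sdiff subset_rfl hST).trans h.sdiff_subset, fun f hf =>
    (h.edge_subset f hf).imp (·.trans (union_subset_union_left hST))
      (·.trans (union_subset_union_left hST))⟩

theorem addEdge (h : G.IsSeparation S C R) (he : e ⊆ S ∪ C ∨ e ⊆ S ∪ R) :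
    (G.addEdge e).IsSeparation S C R :=
  ⟨h.disjoint, h.sdiff_subset, fun f hf => by
    rcases mem_insert.mp (edges_addEdge_subset G e hf) with rfl | hf
    · exact he
    · exact h.edge_subset f hf⟩

theorem isVertexCut (h : H.IsSeparation S C R) {a b : ℕ} (ha : a ∈ H.verts \ S) (haC : a ∈ C)
    (hb : b ∈ H.verts \ S) (hbR : b ∈ R) : H.IsVertexCut (S ∩ H.verts) := by
  refine ⟨inter_subset_right, fun hconn => ?_⟩
  rw [sdiff_inter_self_right] at hconn
  have hreach := hconn a (mem_inter.mpr ⟨(mem_sdiff.mp ha).1, ha⟩) b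
    (mem_inter.mpr ⟨(mem_sdiff.mp hb).1, hb⟩)
  refine disjoint_left.mp h.disjoint (mem_of_reflTransGen_adj ?_ hreach haC) hbR
  intro f hf x hxf hxC
  obtain ⟨hfH, hfS⟩ := mem_induce_edges.mp hf
  have hfS' : Disjoint f S := disjoint_left.mpr fun y hy => (mem_sdiff.mp (hfS hy)).2
  rcases h.edge_subset f hfH with hsub | hsub
  · exact hfS'.left_le_of_le_sup_left hsub
  · exact absurd (hfS'.left_le_of_le_sup_left hsub hxf) (disjoint_left.mp h.disjoint hxC)

theorem subset_or_subset_of_card_lt_kappa (h : H.IsSeparation S C R) (hS : #S < H.kappa) :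
    H.verts ⊆ S ∪ C ∨ H.verts ⊆ S ∪ R := by
  by_contra! hne
  obtain ⟨a, ha, haSC⟩ := not_subset.mp hne.1
  obtain ⟨b, hb, hbSR⟩ := not_subset.mp hne.2
  simp only [mem_union, not_or] at haSC hbSR
  have hbC : b ∈ C := by
    simpa [hbSR.2] using h.sdiff_subset (mem_sdiff.mpr ⟨hb, hbSR.1⟩)
  have haR : a ∈ R := by
    simpa [haSC.2] using h.sdiff_subset (mem_sdiff.mpr ⟨ha, haSC.1⟩)
  have := kappa_le_card_of_isVertexCut
    (h.isVertexCut (mem_sdiff.mpr ⟨hb, hbSR.1⟩) hbC (mem_sdiff.mpr ⟨ha, haSC.1⟩) haR)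
  have := card_le_card (inter_subset_left : S ∩ H.verts ⊆ S)
  omega

theorem subset_union_of_mem (h : H.IsSeparation S C R) (hS : #S < H.kappa) {b : ℕ}
    (hb : b ∈ H.verts) (hbS : b ∉ S) (hbR : b ∈ R) : H.verts ⊆ S ∪ R :=
  (h.subset_or_subset_of_card_lt_kappa hS).resolve_left fun hsub => by
    have := hsub hb
    simp only [mem_union, hbS, false_or] at this
    exact disjoint_left.mp h.disjoint this hbR

theorem subset_insert_union_of_isSub_addEdge (h : G.IsSeparation X C R) {u w : ℕ}
    (hH : H.IsSub (G.addEdge {u, w})) (hκ : #X + 1 < H.kappa) (hwH : w ∈ H.verts) (hwX : w ∉ X)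
    (hwR : w ∈ R) (huw : u ≠ w) : H.verts ⊆ insert u X ∪ R := by
  have he : {u, w} ⊆ insert u X ∪ R := by simp [insert_subset_iff, hwR]
  exact (((h.mono_left (subset_insert u X)).addEdge (Or.inr he)).mono hH).subset_union_of_mem
    ((card_insert_le u X).trans_lt hκ) hwH (by simp [huw.symm, hwX]) hwR

theorem card_edges_add_card_edges_induce (h : G.IsSeparation S C R) :
    #G.edges + #(G.induce S).edges = #(G.induce (S ∪ C)).edges + #(G.induce (S ∪ R)).edges := by
  have hunion : (G.induce (S ∪ C)).edges ∪ (G.induce (S ∪ R)).edges = G.edges := by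
    ext f
    simp only [mem_union, mem_induce_edges]
    refine ⟨fun h' => h'.elim (·.1) (·.1), fun hf => ?_⟩
    exact (h.edge_subset f hf).imp (⟨hf, ·⟩) (⟨hf, ·⟩)
  have hinter : (G.induce (S ∪ C)).edges ∩ (G.induce (S ∪ R)).edges = (G.induce S).edges := by
    ext f
    simp only [mem_inter, mem_induce_edges]
    rw [and_and_and_comm, and_self, ← subset_inter_iff, ← union_inter_distrib_left,
      disjoint_iff_inter_eq_empty.mp h.disjoint, union_empty]
  rw [← hunion, ← hinter, card_union_add_card_inter]

end IsSeparation

theorem IsVertexCut.exists_isSeparation (hG : ∀ f ∈ G.edges, #f ≤ 2) (hX : G.IsVertexCut X) :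
    ∃ C R, G.IsSeparation X C R ∧ C ∪ R = G.verts \ X ∧ C.Nonempty ∧ R.Nonempty := by
  classical
  obtain ⟨u, hu, w, hw, huw⟩ : ∃ u ∈ (G.induce (G.verts \ X)).verts,
      ∃ w ∈ (G.induce (G.verts \ X)).verts,
        ¬ Relation.ReflTransGen (G.induce (G.verts \ X)).Adj u w := by
    simpa [Connected] using hX.2
  have hu' : u ∈ G.verts \ X := (mem_inter.mp hu).2
  have hw' : w ∈ G.verts \ X := (mem_inter.mp hw).2
  set C := (G.verts \ X).filter (Relation.ReflTransGen (G.induce (G.verts \ X)).Adj u)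
  have hcover : C ∪ ((G.verts \ X) \ C) = G.verts \ X := union_sdiff_of_subset (filter_subset _ _)
  refine ⟨C, _, ⟨disjoint_sdiff, hcover.ge, fun f hf => ?_⟩, hcover,
    ⟨u, mem_filter.mpr ⟨hu', .refl⟩⟩, ⟨w, mem_sdiff.mpr ⟨hw', fun h => huw (mem_filter.mp h).2⟩⟩⟩
  by_contra! hne
  obtain ⟨x, hxf, hx⟩ := not_subset.mp hne.1
  obtain ⟨y, hyf, hy⟩ := not_subset.mp hne.2
  have hxX : x ∈ G.verts \ X := by
    simp only [mem_union, not_or] at hx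
    exact mem_sdiff.mpr ⟨G.edge_sub f hf hxf, hx.1⟩
  have hyC : y ∈ C := by
    simp only [mem_union, mem_sdiff, not_or, not_and, not_not] at hy
    exact hy.2 ⟨G.edge_sub f hf hyf, hy.1⟩
  have hxy : x ≠ y := by
    rintro rfl
    exact hx (mem_union_right _ hyC)
  have hf_eq : f = {x, y} :=
    (eq_of_subset_of_card_le (by simp [insert_subset_iff, hxf, hyf])
      (by rw [card_pair hxy]; exact hG f hf)).symm
  have hfK : f ∈ (G.induce (G.verts \ X)).edges := by
    refine mem_induce_edges.mpr ⟨hf, hf_eq ▸ ?_⟩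
    simp [insert_subset_iff, hxX, (mem_filter.mp hyC).1]
  exact hx (mem_union_right _ (mem_filter.mpr ⟨hxX, (mem_filter.mp hyC).2.tail ⟨f, hfK, hyf, hxf⟩⟩))

theorem card_verts_induce_union (hS : S ⊆ G.verts) (hY : Y ⊆ G.verts \ S) :
    #(G.induce (S ∪ Y)).verts = #S + #Y := by
  rw [show (G.induce (S ∪ Y)).verts = S ∪ Y from
      inter_eq_right.mpr (union_subset hS (hY.trans sdiff_subset)),
    card_union_of_disjoint (disjoint_sdiff.mono_right hY)]

theorem card_edges_induce_add_card_sdiff (hG : G.IsUniform r) (S : Finset ℕ) :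
    #(G.induce S).edges + #(S.powersetCard r \ G.edges) = (#S).choose r := by
  have hS : (G.induce S).edges = S.powersetCard r ∩ G.edges := by
    ext f
    simp only [mem_induce_edges, mem_inter, mem_powersetCard]
    exact ⟨fun ⟨hf, hfS⟩ => ⟨⟨hfS, hG f hf⟩, hf⟩, fun ⟨⟨hfS, _⟩, hf⟩ => ⟨hf, hfS⟩⟩
  rw [hS, add_comm, card_sdiff_add_card_inter, card_powersetCard]

theorem exists_maximal_addEdges (hG : G.kappaBar ≤ k) (F : Finset (Finset ℕ)) :
    ∃ A ⊆ F, (G.addEdges A).kappaBar ≤ k ∧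
      ∀ e ∈ F, e ∉ A → k + 1 ≤ (G.addEdges (insert e A)).kappaBar := by
  obtain ⟨A, hA, hmax⟩ := exists_max_image (F.powerset.filter fun A => (G.addEdges A).kappaBar ≤ k)
    card ⟨∅, by simpa [addEdges_empty] using hG⟩
  rw [mem_filter, mem_powerset] at hA
  refine ⟨A, hA.1, hA.2, fun e he heA => ?_⟩
  by_contra! hek
  have := hmax (insert e A) (mem_filter.mpr ⟨mem_powerset.mpr (insert_subset he hA.1), by omega⟩)
  rw [card_insert_of_notMem heA] at this
  omega

namespace VertexKMaximal

theorem exists_isSub_addEdge_lt_kappa (hG : G.VertexKMaximal r k) (he : e ⊆ G.verts)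
    (hcard : #e = r) (heG : e ∉ G.edges) :
    ∃ H : FinsetHypergraph, H.IsSub (G.addEdge e) ∧ k + 1 ≤ H.kappa ∧ e ∈ H.edges := by
  obtain ⟨H, hH, hκ⟩ := exists_isSub_kappa_eq_kappaBar (G.addEdge e)
  refine ⟨H, hH, hκ ▸ hG.2.2 e he hcard heG, ?_⟩
  by_contra heH
  have hHG : H.IsSub G := ⟨hH.1, fun f hf =>
    (mem_insert.mp (edges_addEdge_subset G e (hH.2 hf))).resolve_left (by rintro rfl; exact heH hf)⟩
  have := kappa_le_kappaBar hHG
  have := hG.2.2 e he hcard heG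
  have := hG.2.1
  omega

theorem edges_eq_powersetCard (hG : G.VertexKMaximal r k) (hn : #G.verts ≤ k + 1) :
    G.edges = G.verts.powersetCard r := by
  refine Subset.antisymm (fun e he => mem_powersetCard.mpr ⟨G.edge_sub e he, hG.1 e he⟩)
    fun e he => ?_
  obtain ⟨he, hcard⟩ := mem_powersetCard.mp he
  by_contra heG
  obtain ⟨H, hH, hκ, -⟩ := hG.exists_isSub_addEdge_lt_kappa he hcard heG
  have := kappa_le_card_sub_one H
  have : #H.verts ≤ #G.verts := card_le_card hH.1
  omega

theorem le_card_of_isVertexCut (hG : G.VertexKMaximal 2 k) (hX : G.IsVertexCut X) : k ≤ #X := by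
  by_contra! hXk
  obtain ⟨C, R, hsep, hcover, ⟨u, huC⟩, ⟨w, hwR⟩⟩ :=
    hX.exists_isSeparation fun f hf => (hG.1 f hf).le
  have hu : u ∈ G.verts \ X := hcover ▸ mem_union_left _ huC
  have hw : w ∈ G.verts \ X := hcover ▸ mem_union_right _ hwR
  have huR : u ∉ R := disjoint_left.mp hsep.disjoint huC
  have hwC : w ∉ C := disjoint_right.mp hsep.disjoint hwR
  have huw : u ≠ w := by
    rintro rfl
    exact huR hwR
  have heG : {u, w} ∉ G.edges := fun hmem => by
    rcases hsep.edge_subset _ hmem with h | h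
    · simpa [(mem_sdiff.mp hw).2, hwC] using h (mem_insert_of_mem (mem_singleton_self w))
    · simpa [(mem_sdiff.mp hu).2, huR] using h (mem_insert_self u {w})
  obtain ⟨H, hH, hκ, heH⟩ := hG.exists_isSub_addEdge_lt_kappa
    (insert_subset (mem_sdiff.mp hu).1 (singleton_subset_iff.mpr (mem_sdiff.mp hw).1))
    (card_pair huw) heG
  have hR := hsep.subset_insert_union_of_isSub_addEdge hH (by omega)
    (H.edge_sub _ heH (by simp)) (mem_sdiff.mp hw).2 hwR huw
  have hC := hsep.symm.subset_insert_union_of_isSub_addEdge (pair_comm u w ▸ hH) (by omega)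
    (H.edge_sub _ heH (by simp)) (mem_sdiff.mp hu).2 huC huw.symm
  have hsub : H.verts ⊆ insert u (insert w X) := fun z hz => by
    have hzR := hR hz
    have hzC := hC hz
    have hCR : z ∈ C → z ∉ R := fun h => disjoint_left.mp hsep.disjoint h
    simp only [mem_union, mem_insert] at hzR hzC ⊢
    tauto
  have := card_le_card hsub
  have := card_insert_le u (insert w X)
  have := card_insert_le w X
  have := kappa_le_card_sub_one H
  omega

theorem exists_isVertexCut_card_eq (hG : G.VertexKMaximal 2 k) (hn : k + 2 ≤ #G.verts) :
    ∃ S, G.IsVertexCut S ∧ #S = k := by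
  have hκ : G.kappa ≤ k := (kappa_le_kappaBar (IsSub.refl G)).trans hG.2.1
  have hcut : ∃ X, G.IsVertexCut X := by
    by_contra! h
    rw [kappa_of_forall_not_isVertexCut h] at hκ
    omega
  obtain ⟨S, hS, hSκ⟩ := exists_isVertexCut_card_eq_kappa hcut
  exact ⟨S, hS, le_antisymm (hSκ ▸ hκ) (hG.le_card_of_isVertexCut hS)⟩

theorem induce_addEdges (hG : G.VertexKMaximal 2 k) (hsep : G.IsSeparation S C R)
    (hS : #S ≤ k) (hA : A ⊆ S.powersetCard 2)
    (hAk : ((G.induce (S ∪ C)).addEdges A).kappaBar ≤ k)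
    (hmax : ∀ e ∈ S.powersetCard 2 \ G.edges, e ∉ A →
      k + 1 ≤ ((G.induce (S ∪ C)).addEdges (insert e A)).kappaBar) :
    ((G.induce (S ∪ C)).addEdges A).VertexKMaximal 2 k := by
  refine ⟨fun f hf => ?_, hAk, fun e he hcard heA => ?_⟩
  · rcases mem_addEdges_edges.mp hf with hf | hf
    · exact hG.1 f ((induce_isSub G _).2 hf)
    · exact (mem_powersetCard.mp (hA hf.1)).2
  rw [addEdge_addEdges]
  have heY : e ⊆ S ∪ C := he.trans inter_subset_right
  have heG : e ∉ G.edges := fun h =>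
    heA (mem_addEdges_edges.mpr (Or.inl (mem_induce_edges.mpr ⟨h, heY⟩)))
  by_cases heS : e ⊆ S
  · refine hmax e (mem_sdiff.mpr ⟨mem_powersetCard.mpr ⟨heS, hcard⟩, heG⟩) fun h => heA ?_
    exact mem_addEdges_edges.mpr (Or.inr ⟨h, he, card_pos.mp (by omega)⟩)
  · obtain ⟨x, hxe, hxS⟩ := not_subset.mp heS
    obtain ⟨H, hH, hκ, heH⟩ :=
      hG.exists_isSub_addEdge_lt_kappa (he.trans inter_subset_left) hcard heG
    have hHY : H.verts ⊆ S ∪ C :=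
      ((hsep.addEdge (Or.inl heY)).mono hH).symm.subset_union_of_mem (by omega)
        (H.edge_sub e heH hxe) hxS (by simpa [hxS] using heY hxe)
    exact hκ.trans (kappa_le_kappaBar (isSub_induce_addEdges hH hHY (mem_insert_self e A)))

theorem disjoint_of_kappaBar_le (hG : G.VertexKMaximal 2 k) (hsep : G.IsSeparation S C R)
    (hSv : S ⊆ G.verts) (hS : #S ≤ k) (hA : A ⊆ S.powersetCard 2 \ G.edges)
    (hAk : ((G.induce (S ∪ C)).addEdges A).kappaBar ≤ k)
    (hBk : ((G.induce (S ∪ R)).addEdges B).kappaBar ≤ k) : Disjoint A B := by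
  refine disjoint_left.mpr fun e heA heB => ?_
  obtain ⟨heP, heG⟩ := mem_sdiff.mp (hA heA)
  obtain ⟨heS, hcard⟩ := mem_powersetCard.mp heP
  obtain ⟨H, hH, hκ, -⟩ := hG.exists_isSub_addEdge_lt_kappa (heS.trans hSv) hcard heG
  rcases ((hsep.addEdge (Or.inl (heS.trans subset_union_left))).mono hH)
    |>.subset_or_subset_of_card_lt_kappa (by omega) with hY | hY
  · have := kappa_le_kappaBar (isSub_induce_addEdges hH hY heA)
    omega
  · have := kappa_le_kappaBar (isSub_induce_addEdges hH hY heB)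
    omega

theorem exists_split (hG : G.VertexKMaximal 2 k) (hn : k + 2 ≤ #G.verts) :
    ∃ G₁ G₂ : FinsetHypergraph, G₁.VertexKMaximal 2 k ∧ G₂.VertexKMaximal 2 k ∧
      k < #G₁.verts ∧ k < #G₂.verts ∧ #G₁.verts + #G₂.verts = #G.verts + k ∧
      #G₁.edges + #G₂.edges ≤ #G.edges + k.choose 2 := by
  obtain ⟨S, hS, hSk⟩ := hG.exists_isVertexCut_card_eq hn
  obtain ⟨C, R, hsep, hcover, hC, hR⟩ := hS.exists_isSeparation fun f hf => (hG.1 f hf).le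
  have hκ : ∀ Y, (G.induce Y).kappaBar ≤ k :=
    fun Y => (kappaBar_mono (induce_isSub G Y)).trans hG.2.1
  obtain ⟨A, hAF, hAk, hAmax⟩ := exists_maximal_addEdges (hκ (S ∪ C)) (S.powersetCard 2 \ G.edges)
  obtain ⟨B, hBF, hBk, hBmax⟩ := exists_maximal_addEdges (hκ (S ∪ R)) (S.powersetCard 2 \ G.edges)
  refine ⟨_, _, hG.induce_addEdges hsep hSk.le (hAF.trans sdiff_subset) hAk hAmax,
    hG.induce_addEdges hsep.symm hSk.le (hBF.trans sdiff_subset) hBk hBmax, ?_⟩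
  have hv₁ : #((G.induce (S ∪ C)).addEdges A).verts = #S + #C :=
    card_verts_induce_union hS.1 (hcover ▸ subset_union_left)
  have hv₂ : #((G.induce (S ∪ R)).addEdges B).verts = #S + #R :=
    card_verts_induce_union hS.1 (hcover ▸ subset_union_right)
  have hv : #G.verts = #S + #C + #R := by
    rw [← card_sdiff_add_card_eq_card hS.1, ← hcover, card_union_of_disjoint hsep.disjoint]
    ring
  have hAB : #A + #B ≤ #(S.powersetCard 2 \ G.edges) := by
    rw [← card_union_of_disjoint (hG.disjoint_of_kappaBar_le hsep hS.1 hSk.le hAF hAk hBk)]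
    exact card_le_card (union_subset hAF hBF)
  have he₁ := card_edges_addEdges_le (G.induce (S ∪ C)) A
  have he₂ := card_edges_addEdges_le (G.induce (S ∪ R)) B
  have he := hsep.card_edges_add_card_edges_induce
  have hS2 := card_edges_induce_add_card_sdiff hG.1 S
  rw [hSk] at hS2
  have := hC.card_pos
  have := hR.card_pos
  refine ⟨?_, ?_, ?_, ?_⟩ <;> omega

theorem le_card_edges (hG : G.VertexKMaximal 2 k) (hn : k + 1 ≤ #G.verts) :
    (#G.verts - k) * k + k.choose 2 ≤ #G.edges := by
  induction hN : #G.verts using Nat.strong_induction_on generalizing G with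
  | _ n ih =>
  rcases (show n = k + 1 ∨ k + 2 ≤ n by omega) with rfl | hn₂
  · rw [hG.edges_eq_powersetCard hN.le, card_powersetCard, hN, Nat.choose_succ_succ,
      Nat.choose_one_right, Nat.add_sub_cancel_left, one_mul]
  · obtain ⟨G₁, G₂, h₁, h₂, hv₁, hv₂, hv, he⟩ := hG.exists_split (hN ▸ hn₂)
    have ih₁ := ih _ (by omega) h₁ hv₁ rfl
    have ih₂ := ih _ (by omega) h₂ hv₂ rfl
    have hsplit : n - k = (#G₁.verts - k) + (#G₂.verts - k) := by omega
    rw [hsplit, add_mul]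
    omega

end VertexKMaximal

end FinsetHypergraph

theorem stmt_9_general (n k : ℕ) (hn : k + 1 ≤ n)
    (G : FinsetHypergraph) (hcard : G.verts.card = n) (hG : G.VertexKMaximal 2 k) :
    n.choose 2 - (n - k).choose 2 ≤ G.edges.card ∧
      n.choose 2 - (n - k).choose 2 = (n - k) * k + k * (k - 1) / 2 := by
  have hchoose : n.choose 2 = (n - k).choose 2 + ((n - k) * k + k.choose 2) := by
    rw [← add_assoc, ← Nat.add_choose_two, Nat.sub_add_cancel (by omega)]
  have hbound := hG.le_card_edges (hcard ▸ hn)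
  rw [hcard] at hbound
  rw [hchoose, Nat.add_sub_cancel_left, ← Nat.choose_two_right]
  exact ⟨hbound, rfl⟩

/-- Every vertex-`k`-maximal graph (2-uniform hypergraph) on
`n ≥ k + 1 ≥ 3` vertices has at least `C(n,2) - C(n-k,2) = (n-k)k + k(k-1)/2` edges. -/
theorem stmt_9 (n k : ℕ) (hk : 2 ≤ k) (hn : k + 1 ≤ n)
    (G : FinsetHypergraph) (hcard : G.verts.card = n) (hG : G.VertexKMaximal 2 k) :
    n.choose 2 - (n - k).choose 2 ≤ G.edges.card ∧
      n.choose 2 - (n - k).choose 2 = (n - k) * k + k * (k - 1) / 2 :=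
  stmt_9_general n k hn G hcard hG
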